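/- For any two quantum states ρ and σ on a finite-dimensional Hilbert space, the trace distance between ρ and σ is at least the trace distance between their ordered eigenvalue spectra, i.e., (1/2)‖ρ−σ‖₁ ≥ (1/2)Σᵢ|λᵢ(ρ)−λᵢ(σ)| where λᵢ denotes eigenvalues sorted in decreasing order. -/

import Mathlib

open Matrix Kronecker ComplexOrder

noncomputable section

variable {n : Type*} [Fintype n] [DecidableEq n]

/-- The positive semidefinite square root of a positive semidefinite matrix
(as `Matrix.PosSemidef.sqrt` was defined in Mathlib, Dec 2024; since removed). -/
def Matrix.PosSemidef.sqrt {𝕜 : Type*} [RCLike 𝕜] {A : Matrix n n 𝕜} (hA : A.PosSemidef) :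
    Matrix n n 𝕜 :=
  hA.1.eigenvectorUnitary.1 * diagonal ((↑) ∘ Real.sqrt ∘ hA.1.eigenvalues) *
    (star hA.1.eigenvectorUnitary : Matrix n n 𝕜)

open Classical in
/-- The square root of a matrix: the PSD square root if the matrix is PSD, else 0. -/
def msqrt (A : Matrix n n ℂ) : Matrix n n ℂ :=
  if h : A.PosSemidef then h.sqrt else 0

/-- The trace norm (Schatten 1-norm) of a matrix. -/
def trNorm (A : Matrix n n ℂ) : ℝ :=
  ((Matrix.posSemidef_conjTranspose_mul_self A).sqrt.trace).re

/-- The operator norm of a matrix, acting on the Euclidean space. -/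
def opNorm (A : Matrix n n ℂ) : ℝ :=
  ‖(Matrix.toEuclideanCLM (𝕜 := ℂ) A : EuclideanSpace ℂ n →L[ℂ] EuclideanSpace ℂ n)‖

/-- A (normalized) quantum state: positive semidefinite with unit trace. -/
def IsState (ρ : Matrix n n ℂ) : Prop := ρ.PosSemidef ∧ ρ.trace = 1

/-- A subnormalized quantum state: positive semidefinite with trace at most one. -/
def IsSubState (ρ : Matrix n n ℂ) : Prop := ρ.PosSemidef ∧ (ρ.trace).re ≤ 1

/-- Loewner (semidefinite) order: `A ≤ B` iff `B - A` is positive semidefinite. -/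
def LoewnerLE (A B : Matrix n n ℂ) : Prop := (B - A).PosSemidef

/-- Fidelity `F(ρ,σ) = ‖√ρ√σ‖₁` (extended to positive operators). -/
def fid (ρ σ : Matrix n n ℂ) : ℝ := trNorm (msqrt ρ * msqrt σ)

/-- Generalized fidelity for subnormalized states. -/
def gFid (ρ σ : Matrix n n ℂ) : ℝ :=
  fid ρ σ + Real.sqrt ((1 - ρ.trace.re) * (1 - σ.trace.re))

/-- (Generalized) purified distance `P(ρ,σ) = sqrt(1 - F(ρ,σ)²)`. -/
def pDist (ρ σ : Matrix n n ℂ) : ℝ := Real.sqrt (1 - (gFid ρ σ)^2)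

/-- Generalized trace distance `δ(ρ,σ) = (‖ρ-σ‖₁ + |Tr(ρ-σ)|)/2` for subnormalized states. -/
def trDist (ρ σ : Matrix n n ℂ) : ℝ :=
  (trNorm (ρ - σ) + |(ρ.trace - σ.trace).re|) / 2

variable {α β γ : Type*} [Fintype α] [DecidableEq α] [Fintype β] [DecidableEq β]
  [Fintype γ] [DecidableEq γ]

/-- Partial trace over the second tensor factor. -/
def ptrSnd (ρ : Matrix (α × β) (α × β) ℂ) : Matrix α α ℂ :=
  fun i j => ∑ k, ρ (i, k) (j, k)

/-- Partial trace over the first tensor factor. -/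
def ptrFst (ρ : Matrix (α × β) (α × β) ℂ) : Matrix β β ℂ :=
  fun i j => ∑ k, ρ (k, i) (k, j)

/-- Partial trace over the middle factor of a tripartite system `(α × β) × γ`. -/
def ptrMid (ρ : Matrix ((α × β) × γ) ((α × β) × γ) ℂ) : Matrix (α × γ) (α × γ) ℂ :=
  fun p q => ∑ m, ρ ((p.1, m), p.2) ((q.1, m), q.2)

/-- Max-relative entropy `D_max(ρ‖σ) = inf {λ : ρ ≤ 2^λ σ}`. -/
def Dmax (ρ σ : Matrix n n ℂ) : ℝ :=
  sInf {l : ℝ | LoewnerLE ρ (((2:ℝ) ^ l) • σ)}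

open Classical in
/-- von Neumann entropy (base 2) of a matrix (0 if not Hermitian). -/
def vnEntropy (ρ : Matrix n n ℂ) : ℝ :=
  if h : ρ.IsHermitian then -∑ i, (h.eigenvalues i) * Real.logb 2 (h.eigenvalues i) else 0

open Classical in
/-- The spectrum of a matrix sorted in decreasing order (0 if not Hermitian). -/
def sortedSpecDesc {d : ℕ} (ρ : Matrix (Fin d) (Fin d) ℂ) : Fin d → ℝ :=
  if h : ρ.IsHermitian then (fun i => (h.eigenvalues ∘ Tuple.sort h.eigenvalues) i.rev)
  else 0

/-! Write `ρ - σ = P - Q` with `P = (ρ - σ)⁺` and `Q = (ρ - σ)⁻` positive semidefinite, so that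
`τ := σ + P = ρ + Q` dominates both states in the Loewner order and `‖ρ - σ‖₁ = tr P + tr Q`.
Weyl's monotonicity principle (a nonzero vector in the span of the top `k + 1` eigenvectors of one
operator and the bottom `n - k` eigenvectors of the other exists by a dimension count) gives
`λᵢ(ρ), λᵢ(σ) ≤ λᵢ(τ)`, hence `|λᵢ(ρ) - λᵢ(σ)| ≤ (λᵢ(τ) - λᵢ(ρ)) + (λᵢ(τ) - λᵢ(σ))`, and summing
over `i` gives `2 tr τ - tr ρ - tr σ = tr P + tr Q`. -/

open Module RCLike
open scoped InnerProductSpace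

namespace OrthonormalBasis

variable {ι 𝕜 E : Type*} [Fintype ι] [RCLike 𝕜] [NormedAddCommGroup E] [InnerProductSpace 𝕜 E]

lemma repr_apply_eq_zero_of_mem_span (b : OrthonormalBasis ι 𝕜 E) {s : Set ι} {x : E}
    (hx : x ∈ Submodule.span 𝕜 (b '' s)) {i : ι} (hi : i ∉ s) : b.repr x i = 0 := by
  classical
  rw [b.repr_apply_apply, ← Submodule.mem_orthogonal_singleton_iff_inner_right]
  refine Submodule.span_le.mpr ?_ hx
  rintro _ ⟨j, hj, rfl⟩
  rw [SetLike.mem_coe, Submodule.mem_orthogonal_singleton_iff_inner_right,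
    orthonormal_iff_ite.mp b.orthonormal, if_neg (by rintro rfl; exact hi hj)]

lemma finrank_span_image (b : OrthonormalBasis ι 𝕜 E) (s : Finset ι) :
    finrank 𝕜 (Submodule.span 𝕜 (b '' s)) = s.card := by
  rw [Set.image_eq_range, finrank_span_eq_card]
  · simp
  · exact b.orthonormal.linearIndependent.comp _ Subtype.val_injective

end OrthonormalBasis

namespace LinearMap.IsSymmetric

variable {𝕜 E : Type*} [RCLike 𝕜] [NormedAddCommGroup E] [InnerProductSpace 𝕜 E]
  [FiniteDimensional 𝕜 E] {T : E →ₗ[𝕜] E} {n : ℕ}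

lemma re_inner_apply_self_eq_sum (hT : T.IsSymmetric) (hn : finrank 𝕜 E = n) (x : E) :
    re ⟪T x, x⟫_𝕜 = ∑ i, hT.eigenvalues hn i * ‖(hT.eigenvectorBasis hn).repr x i‖ ^ 2 := by
  rw [← (hT.eigenvectorBasis hn).repr.inner_map_map, PiLp.inner_apply, map_sum]
  refine Finset.sum_congr rfl fun i _ => ?_
  rw [hT.eigenvectorBasis_apply_self_apply, ← smul_eq_mul, inner_smul_left, conj_ofReal,
    inner_self_eq_norm_sq_to_K, re_ofReal_mul]
  norm_cast

lemma mul_norm_sq_le_re_inner_apply_self (hT : T.IsSymmetric) (hn : finrank 𝕜 E = n)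
    {s : Set (Fin n)} {c : ℝ} (hc : ∀ i ∈ s, c ≤ hT.eigenvalues hn i) {x : E}
    (hx : x ∈ Submodule.span 𝕜 (hT.eigenvectorBasis hn '' s)) :
    c * ‖x‖ ^ 2 ≤ re ⟪T x, x⟫_𝕜 := by
  rw [hT.re_inner_apply_self_eq_sum hn, ← (hT.eigenvectorBasis hn).sum_sq_norm_inner_right x,
    Finset.mul_sum]
  refine Finset.sum_le_sum fun i _ => ?_
  rw [← OrthonormalBasis.repr_apply_apply]
  by_cases hi : i ∈ s
  · exact mul_le_mul_of_nonneg_right (hc i hi) (by positivity)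
  · simp [OrthonormalBasis.repr_apply_eq_zero_of_mem_span _ hx hi]

lemma re_inner_apply_self_le_mul_norm_sq (hT : T.IsSymmetric) (hn : finrank 𝕜 E = n)
    {s : Set (Fin n)} {c : ℝ} (hc : ∀ i ∈ s, hT.eigenvalues hn i ≤ c) {x : E}
    (hx : x ∈ Submodule.span 𝕜 (hT.eigenvectorBasis hn '' s)) :
    re ⟪T x, x⟫_𝕜 ≤ c * ‖x‖ ^ 2 := by
  rw [hT.re_inner_apply_self_eq_sum hn, ← (hT.eigenvectorBasis hn).sum_sq_norm_inner_right x,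
    Finset.mul_sum]
  refine Finset.sum_le_sum fun i _ => ?_
  rw [← OrthonormalBasis.repr_apply_apply]
  by_cases hi : i ∈ s
  · exact mul_le_mul_of_nonneg_right (hc i hi) (by positivity)
  · simp [OrthonormalBasis.repr_apply_eq_zero_of_mem_span _ hx hi]

theorem eigenvalues_le_eigenvalues_of_isPositive_sub {S : E →ₗ[𝕜] E} (hT : T.IsSymmetric)
    (hS : S.IsSymmetric) (hn : finrank 𝕜 E = n) (hTS : (S - T).IsPositive) (k : Fin n) :
    hT.eigenvalues hn k ≤ hS.eigenvalues hn k := by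
  set V := Submodule.span 𝕜 (hT.eigenvectorBasis hn '' ↑(Finset.Iic k))
  set W := Submodule.span 𝕜 (hS.eigenvectorBasis hn '' ↑(Finset.Ici k))
  have hVW : ¬ Disjoint V W := fun h => by
    have := Submodule.finrank_add_finrank_le_of_disjoint h
    rw [OrthonormalBasis.finrank_span_image, OrthonormalBasis.finrank_span_image, hn,
      Fin.card_Iic, Fin.card_Ici] at this
    omega
  obtain ⟨x, hxV, hxW, hx⟩ : ∃ x ∈ V, x ∈ W ∧ x ≠ 0 := by
    simpa [Submodule.disjoint_def] using hVW
  have hT_ge := hT.mul_norm_sq_le_re_inner_apply_self hn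
    (fun i hi => hT.eigenvalues_antitone hn (Finset.mem_Iic.mp hi)) hxV
  have hS_le := hS.re_inner_apply_self_le_mul_norm_sq hn
    (fun i hi => hS.eigenvalues_antitone hn (Finset.mem_Ici.mp hi)) hxW
  have hTS_x := hTS.re_inner_nonneg_left x
  rw [LinearMap.sub_apply, inner_sub_left, map_sub, sub_nonneg] at hTS_x
  exact le_of_mul_le_mul_right (hT_ge.trans (hTS_x.trans hS_le)) (by positivity)

end LinearMap.IsSymmetric

lemma Tuple.comp_sort_comp_rev_of_antitone {α : Type*} [LinearOrder α] {d : ℕ} {f : Fin d → α}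
    (hf : Antitone f) (σ : Equiv.Perm (Fin d)) : (f ∘ σ) ∘ sort (f ∘ σ) ∘ Fin.rev = f := by
  have hrev : Monotone ((f ∘ σ) ∘ (Fin.revPerm.trans σ.symm)) := by
    simpa [Function.comp_def] using hf.comp Fin.rev_anti
  rw [← Function.comp_assoc, unique_monotone (monotone_sort _) hrev]
  funext i
  simp

section

open scoped MatrixOrder

lemma Matrix.PosSemidef.sqrt_eq_cfcSqrt {𝕜 : Type*} [RCLike 𝕜] {A : Matrix n n 𝕜}
    (hA : A.PosSemidef) : hA.sqrt = CFC.sqrt A := by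
  rw [CFC.sqrt_eq_cfc, cfc_nnreal_eq_real _ A, hA.1.cfc_eq, IsHermitian.cfc,
    Unitary.conjStarAlgAut_apply, PosSemidef.sqrt]
  congr 3
  funext i
  simp [max_eq_left (hA.eigenvalues_nonneg i)]

lemma trNorm_eq_re_trace_abs (A : Matrix n n ℂ) : trNorm A = (CFC.abs A).trace.re := by
  rw [trNorm, PosSemidef.sqrt_eq_cfcSqrt, CFC.abs, star_eq_conjTranspose]

lemma Matrix.IsHermitian.trNorm_eq_re_trace_posPart_add_re_trace_negPart {A : Matrix n n ℂ}
    (hA : A.IsHermitian) : trNorm A = (A⁺).trace.re + (A⁻).trace.re := by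
  rw [trNorm_eq_re_trace_abs, ← CFC.posPart_add_negPart A hA.isSelfAdjoint, trace_add,
    Complex.add_re]

lemma Matrix.IsHermitian.eigenvalues₀_le_eigenvalues₀ {𝕜 : Type*} [RCLike 𝕜]
    {A B : Matrix n n 𝕜} (hA : A.IsHermitian) (hB : B.IsHermitian) (hAB : A ≤ B) :
    hA.eigenvalues₀ ≤ hB.eigenvalues₀ :=
  LinearMap.IsSymmetric.eigenvalues_le_eigenvalues_of_isPositive_sub _ _ _
    (by rw [← map_sub, isPositive_toEuclideanLin_iff]; exact hAB)

lemma sortedSpecDesc_eq_eigenvalues₀ {d : ℕ} {A : Matrix (Fin d) (Fin d) ℂ}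
    (hA : A.IsHermitian) :
    sortedSpecDesc A = hA.eigenvalues₀ ∘ Fin.cast (Fintype.card_fin d).symm := by
  have hf : Antitone (hA.eigenvalues₀ ∘ Fin.cast (Fintype.card_fin d).symm) :=
    hA.eigenvalues₀_antitone.comp_monotone (Fin.cast_strictMono _).monotone
  have key := Tuple.comp_sort_comp_rev_of_antitone hf
    ((Fintype.equivOfCardEq (Fintype.card_fin _) : Fin (Fintype.card (Fin d)) ≃ Fin d).symm.trans
      (finCongr (Fintype.card_fin d)))
  rw [sortedSpecDesc, dif_pos hA, ← key]
  rfl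

lemma sortedSpecDesc_mono {d : ℕ} {A B : Matrix (Fin d) (Fin d) ℂ} (hA : A.IsHermitian)
    (hAB : A ≤ B) : sortedSpecDesc A ≤ sortedSpecDesc B := by
  have hB : B.IsHermitian := by simpa using hA.add (le_iff.mp hAB).isHermitian
  rw [sortedSpecDesc_eq_eigenvalues₀ hA, sortedSpecDesc_eq_eigenvalues₀ hB]
  exact fun i => hA.eigenvalues₀_le_eigenvalues₀ hB hAB _

lemma sum_sortedSpecDesc {d : ℕ} {A : Matrix (Fin d) (Fin d) ℂ} (hA : A.IsHermitian) :
    ∑ i, sortedSpecDesc A i = A.trace.re := by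
  rw [hA.trace_eq_sum_eigenvalues, Complex.re_sum, sortedSpecDesc, dif_pos hA]
  simpa using (Fin.revPerm.trans (Tuple.sort hA.eigenvalues)).sum_comp hA.eigenvalues

lemma sum_abs_sub_sortedSpecDesc_le_trNorm {d : ℕ} {A B : Matrix (Fin d) (Fin d) ℂ}
    (hA : A.IsHermitian) (hB : B.IsHermitian) :
    ∑ i, |sortedSpecDesc A i - sortedSpecDesc B i| ≤ trNorm (A - B) := by
  have hAB : (A - B).IsHermitian := hA.sub hB
  set C := B + (A - B)⁺ with hC_def
  have hC : C = A + (A - B)⁻ := by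
    rw [hC_def, sub_eq_iff_eq_add.mp (CFC.posPart_sub_negPart _ hAB.isSelfAdjoint)]
    abel
  have hCA : C - A = (A - B)⁻ := by rw [hC, add_sub_cancel_left]
  have hCB : C - B = (A - B)⁺ := add_sub_cancel_left _ _
  have hC_herm : C.IsHermitian := hB.add (CFC.posPart_nonneg _).posSemidef.isHermitian
  have hAC : sortedSpecDesc A ≤ sortedSpecDesc C :=
    hC ▸ sortedSpecDesc_mono hA (le_add_of_nonneg_right (CFC.negPart_nonneg _))
  have hBC : sortedSpecDesc B ≤ sortedSpecDesc C :=
    sortedSpecDesc_mono hB (le_add_of_nonneg_right (CFC.posPart_nonneg _))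
  calc ∑ i, |sortedSpecDesc A i - sortedSpecDesc B i|
      ≤ ∑ i, ((sortedSpecDesc C i - sortedSpecDesc A i)
          + (sortedSpecDesc C i - sortedSpecDesc B i)) :=
        Finset.sum_le_sum fun i _ => abs_sub_le_iff.mpr
          ⟨by linarith [hAC i, hBC i], by linarith [hAC i, hBC i]⟩
    _ = (C - A).trace.re + (C - B).trace.re := by
        simp only [Finset.sum_add_distrib, Finset.sum_sub_distrib, sum_sortedSpecDesc hA,
          sum_sortedSpecDesc hB, sum_sortedSpecDesc hC_herm, trace_sub, Complex.sub_re]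
    _ = trNorm (A - B) := by
        rw [hCA, hCB, hAB.trNorm_eq_re_trace_posPart_add_re_trace_negPart, add_comm]

end

/-- The trace distance between two density matrices is at least the
trace distance between their ordered eigenvalue spectra. -/
theorem trDist_ge_trDist_spectra {d : ℕ}
    (ρ σ : Matrix (Fin d) (Fin d) ℂ) (hρ : IsState ρ) (hσ : IsState σ) :
    (1/2 : ℝ) * trNorm (ρ - σ) ≥
      (1/2 : ℝ) * ∑ i, |sortedSpecDesc ρ i - sortedSpecDesc σ i| := by
  have h := sum_abs_sub_sortedSpecDesc_le_trNorm hρ.1.1 hσ.1.1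
  linarith
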